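/- arXiv:1110.5244 — 2 statements merged into one kernel-verified Lean document; each statement's English description precedes it below -/
import Mathlib

section
/- Let c > 0 and let u : ℝ × ℝ² → ℝ be a C^∞ solution of the wave equation ∂_t² u − c² Δu = 0. Then for every t ∈ ℝ, Δt > 0, and x ∈ ℝ²: u(t + Δt, x) = L[ (ξ ↦ u(t, x+ξ) + ξ·∇u(t, x+ξ)) | B(0, cΔt) ] + Δt · L[ (ξ ↦ ∂_t u(t, x+ξ)) | B(0, cΔt) ], where for a region B contained in the closed disk of radius d_c := cΔt centered at the origin, L[f | B] := (1/(2π d_c)) ∫_B f(ξ) (d_c² − |ξ|²)^{−1/2} dξ. -/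
open MeasureTheory

/-- The open disk of radius `R` centered at the origin in `ℝ²`. -/
def originDisk (R : ℝ) : Set (ℝ × ℝ) :=
  {ξ : ℝ × ℝ | ξ.1 ^ 2 + ξ.2 ^ 2 < R ^ 2}

/-- The integral operator `L[f | B] = (1/(2π d_c)) ∫_B f(ξ) (d_c² − |ξ|²)^{−1/2} dξ`. -/
noncomputable def Lop (dc : ℝ) (B : Set (ℝ × ℝ)) (f : ℝ × ℝ → ℝ) : ℝ :=
  (1 / (2 * Real.pi * dc)) *
    ∫ ξ in B, f ξ / Real.sqrt (dc ^ 2 - (ξ.1 ^ 2 + ξ.2 ^ 2))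

noncomputable def pd (v : ℝ×ℝ×ℝ) (f : ℝ×ℝ×ℝ → ℝ) (p : ℝ×ℝ×ℝ) : ℝ := fderiv ℝ f p v

lemma pd_contDiff {f : ℝ×ℝ×ℝ → ℝ} (hf : ContDiff ℝ (⊤ : ℕ∞) f) (v : ℝ×ℝ×ℝ) :
    ContDiff ℝ (⊤ : ℕ∞) (pd v f) := by
  have h1 : ContDiff ℝ (⊤ : ℕ∞) (fderiv ℝ f) := hf.fderiv_right (le_refl _)
  exact h1.clm_apply contDiff_const

lemma pd_hasDerivAt {f : ℝ×ℝ×ℝ → ℝ} (hf : ContDiff ℝ (⊤ : ℕ∞) f) {γ : ℝ → ℝ×ℝ×ℝ} {v : ℝ×ℝ×ℝ}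
    {s : ℝ} (hγ : HasDerivAt γ v s) :
    HasDerivAt (fun r => f (γ r)) (pd v f (γ s)) s :=
  (hf.differentiable (by norm_num) (γ s)).hasFDerivAt.comp_hasDerivAt s hγ

lemma pd_expand (v : ℝ×ℝ×ℝ) (f : ℝ×ℝ×ℝ → ℝ) (p : ℝ×ℝ×ℝ) :
    pd v f p = v.1 * pd (1,0,0) f p + v.2.1 * pd (0,1,0) f p + v.2.2 * pd (0,0,1) f p := by
  have hv : v = v.1 • ((1:ℝ),(0:ℝ),(0:ℝ)) + v.2.1 • ((0:ℝ),(1:ℝ),(0:ℝ))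
      + v.2.2 • ((0:ℝ),(0:ℝ),(1:ℝ)) := by
    simp [Prod.ext_iff]
  simp only [pd]
  nth_rewrite 1 [hv]
  simp only [map_add, _root_.map_smul, smul_eq_mul]

lemma pd_symm {f : ℝ×ℝ×ℝ → ℝ} (hf : ContDiff ℝ (⊤ : ℕ∞) f) (v w : ℝ×ℝ×ℝ) (p : ℝ×ℝ×ℝ) :
    pd w (pd v f) p = pd v (pd w f) p := by
  have hsymm : IsSymmSndFDerivAt ℝ f p := by
    apply ContDiffAt.isSymmSndFDerivAt hf.contDiffAt
    rw [minSmoothness_of_isRCLikeNormedField]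
    exact WithTop.coe_le_coe.2 (le_top : (2:ℕ∞) ≤ ⊤)
  have hdf : Differentiable ℝ (fderiv ℝ f) :=
    (hf.fderiv_right (m := (⊤ : ℕ∞)) (le_refl _)).differentiable (by norm_num)
  have key : ∀ z : ℝ×ℝ×ℝ, pd z f = fun q => (fderiv ℝ f q) z := fun _ => rfl
  have h2 : ∀ z w' : ℝ×ℝ×ℝ, pd w' (pd z f) p = fderiv ℝ (fderiv ℝ f) p w' z := by
    intro z w'
    rw [key z]
    show fderiv ℝ (fun q => (fderiv ℝ f q) z) p w' = _
    rw [fderiv_clm_apply (hdf p) (differentiableAt_const z)]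
    simp
  rw [h2, h2, hsymm.eq]

lemma deriv_slot1 {f : ℝ×ℝ×ℝ → ℝ} (hf : ContDiff ℝ (⊤ : ℕ∞) f) (t x y : ℝ) :
    deriv (fun s => f (s,x,y)) t = pd (1,0,0) f (t,x,y) := by
  have h : HasDerivAt (fun s : ℝ => ((s,x,y) : ℝ×ℝ×ℝ)) (1,0,0) t :=
    (hasDerivAt_id t).prodMk (((hasDerivAt_const t x)).prodMk (hasDerivAt_const t y))
  exact (pd_hasDerivAt hf h).deriv

lemma deriv_slot2 {f : ℝ×ℝ×ℝ → ℝ} (hf : ContDiff ℝ (⊤ : ℕ∞) f) (t x y : ℝ) :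
    deriv (fun a => f (t,a,y)) x = pd (0,1,0) f (t,x,y) := by
  have h : HasDerivAt (fun a : ℝ => ((t,a,y) : ℝ×ℝ×ℝ)) (0,1,0) x :=
    (hasDerivAt_const x t).prodMk ((hasDerivAt_id x).prodMk (hasDerivAt_const x y))
  exact (pd_hasDerivAt hf h).deriv

lemma deriv_slot3 {f : ℝ×ℝ×ℝ → ℝ} (hf : ContDiff ℝ (⊤ : ℕ∞) f) (t x y : ℝ) :
    deriv (fun b => f (t,x,b)) y = pd (0,0,1) f (t,x,y) := by
  have h : HasDerivAt (fun b : ℝ => ((t,x,b) : ℝ×ℝ×ℝ)) (0,0,1) y :=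
    (hasDerivAt_const y t).prodMk ((hasDerivAt_const y x).prodMk (hasDerivAt_id y))
  exact (pd_hasDerivAt hf h).deriv

open Real Set

lemma polar_rect (d : ℝ) (hd : 0 < d) (f : ℝ×ℝ → ℝ) :
    ∫ ξ in originDisk d, f ξ / Real.sqrt (d^2 - (ξ.1^2+ξ.2^2)) =
    ∫ p in Set.Ioo 0 (π/2) ×ˢ Set.Ioo (-π) π,
      (d * Real.sin p.1) * f (d*Real.sin p.1*Real.cos p.2, d*Real.sin p.1*Real.sin p.2) := by
  set R : Set (ℝ×ℝ) := Set.Ioo 0 (π/2) ×ˢ Set.Ioo (-π) π with hR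
  set Ψ : ℝ×ℝ → ℝ×ℝ := fun p => (d*Real.sin p.1*Real.cos p.2, d*Real.sin p.1*Real.sin p.2)
    with hΨ
  set B : ℝ×ℝ → ℝ×ℝ →L[ℝ] ℝ×ℝ := fun p =>
    LinearMap.toContinuousLinearMap (Matrix.toLin (Module.Basis.finTwoProd ℝ) (Module.Basis.finTwoProd ℝ)
      !![d * cos p.1 * cos p.2, -(d * sin p.1) * sin p.2;
         d * cos p.1 * sin p.2, (d * sin p.1) * cos p.2]) with hB
  have hRmeas : MeasurableSet R := (measurableSet_Ioo).prod measurableSet_Ioo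
  have hBderiv : ∀ p ∈ R, HasFDerivWithinAt Ψ (B p) R p := by
    intro p _
    apply HasFDerivAt.hasFDerivWithinAt
    rw [hB]
    simp only
    rw [Matrix.toLin_finTwoProd_toContinuousLinearMap]
    have h1 : HasFDerivAt (fun q : ℝ×ℝ => d * Real.sin q.1)
        ((d * cos p.1) • ContinuousLinearMap.fst ℝ ℝ ℝ) p := by
      exact
        (((Real.hasDerivAt_sin p.1).const_mul d).comp_hasFDerivAt p hasFDerivAt_fst)
    have h2 : HasFDerivAt (fun q : ℝ×ℝ => Real.cos q.2)
        ((-Real.sin p.2) • ContinuousLinearMap.snd ℝ ℝ ℝ) p :=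
      (Real.hasDerivAt_cos p.2).comp_hasFDerivAt p hasFDerivAt_snd
    have h3 : HasFDerivAt (fun q : ℝ×ℝ => Real.sin q.2)
        ((Real.cos p.2) • ContinuousLinearMap.snd ℝ ℝ ℝ) p :=
      (Real.hasDerivAt_sin p.2).comp_hasFDerivAt p hasFDerivAt_snd
    have := (h1.mul h2).prodMk (h1.mul h3)
    refine this.congr_fderiv ?_
    congr 1 <;>
      simp [smul_smul] <;> module
  have hsymm_apply : ∀ q : ℝ×ℝ, polarCoord.symm q = (q.1 * Real.cos q.2, q.1 * Real.sin q.2) :=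
    fun q => rfl
  have hΨeq : ∀ p, Ψ p = polarCoord.symm (d * Real.sin p.1, p.2) := by
    intro p; rw [hsymm_apply]
  have hmaps : ∀ p ∈ R, (d * Real.sin p.1, p.2) ∈ polarCoord.target := by
    rintro ⟨φ, θ⟩ ⟨hφ, hθ⟩
    constructor
    · exact mul_pos hd (Real.sin_pos_of_pos_of_lt_pi hφ.1 (by linarith [Real.pi_pos, hφ.2]))
    · exact hθ
  have hsinpos : ∀ φ ∈ Set.Ioo 0 (π/2), 0 < Real.sin φ := fun φ hφ =>
    Real.sin_pos_of_pos_of_lt_pi hφ.1 (by linarith [Real.pi_pos, hφ.2])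
  have hcospos : ∀ φ ∈ Set.Ioo 0 (π/2), 0 < Real.cos φ := fun φ hφ =>
    Real.cos_pos_of_mem_Ioo ⟨by linarith [hφ.1, Real.pi_pos], hφ.2⟩
  have hinj : Set.InjOn Ψ R := by
    intro p hp q hq h
    rw [hΨeq p, hΨeq q] at h
    have h2 := polarCoord.symm.injOn (by simpa using hmaps p hp) (by simpa using hmaps q hq) h
    obtain ⟨h3, h4⟩ := Prod.mk.injEq .. ▸ h2
    have h5 : Real.sin p.1 = Real.sin q.1 := by
      exact mul_left_cancel₀ hd.ne' h3
    have hmem : ∀ r ∈ R, r.1 ∈ Set.Icc (-(π/2)) (π/2) := by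
      rintro r hr
      exact ⟨by linarith [hr.1.1, Real.pi_pos], (hr.1.2).le⟩
    have := Real.injOn_sin (hmem p hp) (hmem q hq) h5
    exact Prod.ext this h4
  -- change of variables
  have hCoV := integral_image_eq_integral_abs_det_fderiv_smul volume hRmeas hBderiv hinj
    (fun ξ => f ξ / Real.sqrt (d^2 - (ξ.1^2+ξ.2^2)))
  -- the image is a.e. the disk
  have hsub : Ψ '' R ⊆ originDisk d := by
    rintro _ ⟨p, hp, rfl⟩
    have h1 := hsinpos p.1 ⟨hp.1.1, hp.1.2⟩
    have h2 : Real.sin p.1 < 1 := by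
      nlinarith [hcospos p.1 ⟨hp.1.1, hp.1.2⟩, Real.sin_sq_add_cos_sq p.1]
    show (d*Real.sin p.1*Real.cos p.2)^2 + (d*Real.sin p.1*Real.sin p.2)^2 < d^2
    nlinarith [Real.sin_sq_add_cos_sq p.2, mul_pos (mul_pos hd hd) (mul_pos h1 (sub_pos.2 h2)), sq_nonneg (d*Real.sin p.1)]
  have hsup : originDisk d \ {ξ : ℝ×ℝ | ξ.2 = 0} ⊆ Ψ '' R := by
    rintro ξ ⟨hξ, hξ2⟩
    have hsource : ξ ∈ polarCoord.source := Or.inr hξ2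
    set q := polarCoord ξ with hq
    have hqt : q ∈ polarCoord.target := polarCoord.map_source hsource
    have hq1 : q.1 = Real.sqrt (ξ.1^2 + ξ.2^2) := rfl
    have hr_pos : 0 < q.1 := hqt.1
    have hr_lt : q.1 < d := by
      rw [hq1]
      have : ξ.1^2 + ξ.2^2 < d^2 := hξ
      calc Real.sqrt (ξ.1^2+ξ.2^2) < Real.sqrt (d^2) := by
            apply Real.sqrt_lt_sqrt (by positivity) this
        _ = d := Real.sqrt_sq hd.le
    refine ⟨(Real.arcsin (q.1/d), q.2), ⟨⟨?_, ?_⟩, by exact hqt.2⟩, ?_⟩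
    · exact Real.arcsin_pos.2 (div_pos hr_pos hd)
    · exact Real.arcsin_lt_pi_div_two.2 (by rw [div_lt_one hd]; exact hr_lt)
    · have hsin : Real.sin (Real.arcsin (q.1/d)) = q.1/d :=
        Real.sin_arcsin (le_trans (by norm_num) (div_pos hr_pos hd).le) (by rw [div_le_one hd]; exact hr_lt.le)
      rw [hΨeq]
      simp only [hsin]
      rw [mul_div_cancel₀ _ hd.ne']
      exact polarCoord.left_inv hsource
  have hline : volume ({ξ : ℝ×ℝ | ξ.2 = 0}) = 0 := by
    have : {ξ : ℝ×ℝ | ξ.2 = 0} = (Set.univ : Set ℝ) ×ˢ ({0} : Set ℝ) := by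
      ext ⟨a,b⟩; simp [Set.mem_prod, eq_comm]
    rw [this, MeasureTheory.Measure.volume_eq_prod ℝ ℝ, MeasureTheory.Measure.prod_prod]
    simp
  have hae : Ψ '' R =ᵐ[volume] originDisk d := by
    apply MeasureTheory.ae_eq_set.2
    constructor
    · rw [Set.diff_eq_empty.2 hsub]; exact measure_empty
    · refine measure_mono_null ?_ hline
      intro ξ hξ
      by_contra h2
      exact hξ.2 (hsup ⟨hξ.1, h2⟩)
  rw [← MeasureTheory.setIntegral_congr_set hae, hCoV]
  apply MeasureTheory.setIntegral_congr_fun hRmeas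
  rintro ⟨φ, θ⟩ hp
  have hφ : φ ∈ Set.Ioo 0 (π/2) := hp.1
  have hθ : θ ∈ Set.Ioo (-π) π := hp.2
  have hdet : (B (φ,θ)).det = d^2 * Real.sin φ * Real.cos φ := by
    rw [hB]
    simp only [LinearMap.det_toContinuousLinearMap, LinearMap.det_toLin,
      Matrix.det_fin_two_of]
    linear_combination (d^2*Real.sin φ*Real.cos φ) * Real.sin_sq_add_cos_sq θ
  have h1 := (hsinpos φ hφ)
  have h2 := (hcospos φ hφ)
  have hsqrt : Real.sqrt (d^2 - ((d*Real.sin φ*Real.cos θ)^2 + (d*Real.sin φ*Real.sin θ)^2))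
      = d * Real.cos φ := by
    rw [show d^2 - ((d*Real.sin φ*Real.cos θ)^2 + (d*Real.sin φ*Real.sin θ)^2)
        = (d * Real.cos φ)^2 by
          linear_combination (-(d^2*(Real.sin φ)^2)) * Real.sin_sq_add_cos_sq θ
            - d^2 * Real.sin_sq_add_cos_sq φ]
    exact Real.sqrt_sq (mul_pos hd h2).le
  simp only [hdet, smul_eq_mul]
  rw [hΨ]
  simp only
  rw [hsqrt, abs_of_pos (mul_pos (mul_pos (pow_pos hd 2) h1) h2)]
  field_simp

/-- Poisson-formula time stepping: if `u` is a smooth solution of the wave equation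
`∂_t² u − c² Δu = 0` on `ℝ × ℝ²`, then for all `t`, `Δt > 0` and `x`,
`u(t+Δt,x) = L[(1 + ξ·∇) u(t, x+·) | B(0,cΔt)] + Δt · L[∂_t u(t, x+·) | B(0,cΔt)]`. -/
theorem wave_poisson_time_stepping
    (c : ℝ) (hc : 0 < c) (u : ℝ → ℝ → ℝ → ℝ)
    (hu : ContDiff ℝ (⊤ : ℕ∞) (fun p : ℝ × ℝ × ℝ => u p.1 p.2.1 p.2.2))
    (hwave : ∀ t x y : ℝ,
      deriv (fun s => deriv (fun s' => u s' x y) s) t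
        - c ^ 2 * (deriv (fun a => deriv (fun a' => u t a' y) a) x
                 + deriv (fun b => deriv (fun b' => u t x b') b) y) = 0) :
    ∀ (t Δt : ℝ), 0 < Δt → ∀ x y : ℝ,
      u (t + Δt) x y =
        Lop (c * Δt) (originDisk (c * Δt))
          (fun ξ => u t (x + ξ.1) (y + ξ.2)
            + ξ.1 * deriv (fun a => u t a (y + ξ.2)) (x + ξ.1)
            + ξ.2 * deriv (fun b => u t (x + ξ.1) b) (y + ξ.2))
        + Δt * Lop (c * Δt) (originDisk (c * Δt))
            (fun ξ => deriv (fun s => u s (x + ξ.1) (y + ξ.2)) t) := by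
  intro t Δt hΔt x y
  set U : ℝ×ℝ×ℝ → ℝ := fun p => u p.1 p.2.1 p.2.2 with hUdef
  have hU : ContDiff ℝ (⊤ : ℕ∞) U := hu
  set d : ℝ := c * Δt with hd_def
  have hd : 0 < d := mul_pos hc hΔt
  set R : Set (ℝ×ℝ) := Set.Ioo 0 (π/2) ×ˢ Set.Ioo (-π) π with hRdef
  have hRmeas : MeasurableSet R := (measurableSet_Ioo).prod measurableSet_Ioo
  -- partial derivatives
  set Dt : ℝ×ℝ×ℝ → ℝ := pd (1,0,0) U with hDt
  set Dx : ℝ×ℝ×ℝ → ℝ := pd (0,1,0) U with hDx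
  set Dy : ℝ×ℝ×ℝ → ℝ := pd (0,0,1) U with hDy
  have hDtc : ContDiff ℝ (⊤ : ℕ∞) Dt := pd_contDiff hU _
  have hDxc : ContDiff ℝ (⊤ : ℕ∞) Dx := pd_contDiff hU _
  have hDyc : ContDiff ℝ (⊤ : ℕ∞) Dy := pd_contDiff hU _
  -- wave equation in pd form
  have hwave' : ∀ p : ℝ×ℝ×ℝ, pd (1,0,0) Dt p = c^2 * (pd (0,1,0) Dx p + pd (0,0,1) Dy p) := by
    rintro ⟨tt, xx, yy⟩
    have h := hwave tt xx yy
    have e1 : (fun s => deriv (fun s' => u s' xx yy) s) = fun s => Dt (s, xx, yy) := by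
      funext s; exact deriv_slot1 hU s xx yy
    have e2 : (fun a => deriv (fun a' => u tt a' yy) a) = fun a => Dx (tt, a, yy) := by
      funext a; exact deriv_slot2 hU tt a yy
    have e3 : (fun b => deriv (fun b' => u tt xx b') b) = fun b => Dy (tt, xx, b) := by
      funext b; exact deriv_slot3 hU tt xx b
    rw [e1, e2, e3, deriv_slot1 hDtc tt xx yy, deriv_slot2 hDxc tt xx yy,
      deriv_slot3 hDyc tt xx yy] at h
    linarith
  -- geometry/objects
  set Q : ℝ → ℝ → ℝ → ℝ×ℝ×ℝ := fun s φ θ =>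
    (t+s, x + c*(Δt-s)*Real.sin φ*Real.cos θ, y + c*(Δt-s)*Real.sin φ*Real.sin θ) with hQdef
  set K : ℝ → ℝ×ℝ → ℝ := fun s p =>
    (U (Q s p.1 p.2)
      + c*(Δt-s)*Real.sin p.1*(Real.cos p.2 * Dx (Q s p.1 p.2) + Real.sin p.2 * Dy (Q s p.1 p.2))
      + (Δt-s)*Dt (Q s p.1 p.2)) * Real.sin p.1 with hKdef
  set G : ℝ → ℝ := fun s => ∫ p in R, K s p with hGdef
  have hRsub : R ⊆ Set.Icc ((0:ℝ), -π) ((π/2 : ℝ), π) := by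
    rintro ⟨φ, θ⟩ ⟨h1, h2⟩
    exact ⟨⟨h1.1.le, h2.1.le⟩, ⟨h1.2.le, h2.2.le⟩⟩
  have hIOn : ∀ g : ℝ×ℝ → ℝ, Continuous g → IntegrableOn g R volume := fun g hg =>
    ((hg.continuousOn.integrableOn_compact' isCompact_Icc measurableSet_Icc).mono_set hRsub)
  have hcontQ : Continuous fun q : ℝ × (ℝ × ℝ) => Q q.1 q.2.1 q.2.2 := by
    simp only [hQdef]; fun_prop
  have hUQ : Continuous fun q : ℝ × (ℝ × ℝ) => U (Q q.1 q.2.1 q.2.2) :=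
    hU.continuous.comp hcontQ
  have hxQ : Continuous fun q : ℝ × (ℝ × ℝ) => Dx (Q q.1 q.2.1 q.2.2) :=
    hDxc.continuous.comp hcontQ
  have hyQ : Continuous fun q : ℝ × (ℝ × ℝ) => Dy (Q q.1 q.2.1 q.2.2) :=
    hDyc.continuous.comp hcontQ
  have htQ : Continuous fun q : ℝ × (ℝ × ℝ) => Dt (Q q.1 q.2.1 q.2.2) :=
    hDtc.continuous.comp hcontQ
  have hKjoint : Continuous fun q : ℝ × (ℝ × ℝ) => K q.1 q.2 := by
    simp only [hKdef]
    apply Continuous.mul ?_ (by fun_prop)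
    apply Continuous.add (Continuous.add ?_ ?_) ?_
    · exact hUQ
    · apply Continuous.mul (by fun_prop)
      exact ((continuous_cos.comp (continuous_snd.comp continuous_snd)).mul hxQ).add
        ((continuous_sin.comp (continuous_snd.comp continuous_snd)).mul hyQ)
    · exact (by fun_prop : Continuous fun q : ℝ × (ℝ × ℝ) => Δt - q.1).mul htQ
  have hKs : ∀ s : ℝ, Continuous fun p : ℝ×ℝ => K s p := fun s =>
    hKjoint.comp (Continuous.prodMk continuous_const continuous_id)
  -- value at Δt
  have hGΔt : G Δt = (2*π) * u (t+Δt) x y := by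
    have hKconst : ∀ p : ℝ×ℝ, K Δt p = u (t+Δt) x y * Real.sin p.1 := by
      intro p
      simp [hKdef, hQdef, hUdef, sub_self]
    have h1 : G Δt = ∫ p in R, u (t+Δt) x y * Real.sin p.1 := by
      rw [hGdef]
      exact MeasureTheory.setIntegral_congr_fun hRmeas (fun p _ => hKconst p)
    rw [h1, hRdef, MeasureTheory.Measure.volume_eq_prod ℝ ℝ,
      MeasureTheory.setIntegral_prod]
    · have hinner : ∀ φ : ℝ, (∫ θ in Set.Ioo (-π) π, u (t+Δt) x y * Real.sin φ)
          = (2*π) * (u (t+Δt) x y * Real.sin φ) := by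
        intro φ
        rw [MeasureTheory.setIntegral_const, measureReal_def, Real.volume_Ioo]
        rw [ENNReal.toReal_ofReal (by linarith [Real.pi_pos])]
        rw [smul_eq_mul]; ring
      calc ∫ φ in Set.Ioo (0:ℝ) (π/2), ∫ θ in Set.Ioo (-π) π, u (t+Δt) x y * Real.sin φ
          = ∫ φ in Set.Ioo (0:ℝ) (π/2), (2*π) * (u (t+Δt) x y * Real.sin φ) :=
            MeasureTheory.setIntegral_congr_fun measurableSet_Ioo (fun φ _ => hinner φ)
        _ = ∫ φ in (0:ℝ)..(π/2), (2*π) * (u (t+Δt) x y * Real.sin φ) := by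
            rw [← MeasureTheory.integral_Ioc_eq_integral_Ioo,
              ← intervalIntegral.integral_of_le (by positivity)]
        _ = (2*π) * (u (t+Δt) x y * ∫ φ in (0:ℝ)..(π/2), Real.sin φ) := by
            rw [intervalIntegral.integral_const_mul, intervalIntegral.integral_const_mul]
        _ = (2*π) * u (t+Δt) x y := by
            rw [integral_sin]
            simp [Real.cos_pi_div_two]
    · rw [← MeasureTheory.Measure.volume_eq_prod ℝ ℝ, ← hRdef]
      exact hIOn _ (by fun_prop)
  -- step A : identify the RHS with (1/(2π)) * G 0
  have e2 : ∀ a b : ℝ, deriv (fun a' => u t a' b) a = Dx (t, a, b) :=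
    fun a b => deriv_slot2 hU t a b
  have e3 : ∀ a b : ℝ, deriv (fun b' => u t a b') b = Dy (t, a, b) :=
    fun a b => deriv_slot3 hU t a b
  have e1 : ∀ a b : ℝ, deriv (fun s => u s a b) t = Dt (t, a, b) :=
    fun a b => deriv_slot1 hU t a b
  have hf1 : (fun ξ : ℝ×ℝ => u t (x+ξ.1) (y+ξ.2)
      + ξ.1 * deriv (fun a => u t a (y+ξ.2)) (x+ξ.1)
      + ξ.2 * deriv (fun b => u t (x+ξ.1) b) (y+ξ.2))
      = fun ξ : ℝ×ℝ => U (t, x+ξ.1, y+ξ.2) + ξ.1 * Dx (t, x+ξ.1, y+ξ.2)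
          + ξ.2 * Dy (t, x+ξ.1, y+ξ.2) := by
    funext ξ
    rw [e2, e3]
  have hf2 : (fun ξ : ℝ×ℝ => deriv (fun s => u s (x+ξ.1) (y+ξ.2)) t)
      = fun ξ : ℝ×ℝ => Dt (t, x+ξ.1, y+ξ.2) := by
    funext ξ; rw [e1]
  rw [hf1, hf2]
  simp only [Lop]
  rw [polar_rect d hd, polar_rect d hd]
  simp only [Prod.fst, Prod.snd]
  have hc1 : Continuous fun p : ℝ×ℝ =>
      ((t, x + d*Real.sin p.1*Real.cos p.2, y + d*Real.sin p.1*Real.sin p.2) : ℝ×ℝ×ℝ) := by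
    fun_prop
  have hA1 : IntegrableOn (fun p : ℝ×ℝ => (d * Real.sin p.1) *
      (U (t, x + d*Real.sin p.1*Real.cos p.2, y + d*Real.sin p.1*Real.sin p.2)
        + (d*Real.sin p.1*Real.cos p.2) * Dx (t, x + d*Real.sin p.1*Real.cos p.2,
            y + d*Real.sin p.1*Real.sin p.2)
        + (d*Real.sin p.1*Real.sin p.2) * Dy (t, x + d*Real.sin p.1*Real.cos p.2,
            y + d*Real.sin p.1*Real.sin p.2))) R volume := by
    apply hIOn
    apply Continuous.mul (by fun_prop)
    exact ((hU.continuous.comp hc1).add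
      ((by fun_prop : Continuous fun p : ℝ×ℝ => d*Real.sin p.1*Real.cos p.2).mul
        (hDxc.continuous.comp hc1))).add
      ((by fun_prop : Continuous fun p : ℝ×ℝ => d*Real.sin p.1*Real.sin p.2).mul
        (hDyc.continuous.comp hc1))
  have hA2 : IntegrableOn (fun p : ℝ×ℝ => Δt * ((d * Real.sin p.1) *
      Dt (t, x + d*Real.sin p.1*Real.cos p.2, y + d*Real.sin p.1*Real.sin p.2))) R volume := by
    apply hIOn
    exact continuous_const.mul ((by fun_prop : Continuous fun p : ℝ×ℝ =>
      d * Real.sin p.1).mul (hDtc.continuous.comp hc1))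
  rw [show ∀ A B : ℝ, 1/(2*π*d) * A + Δt * (1/(2*π*d) * B) = 1/(2*π*d) * (A + Δt * B)
    from fun A B => by ring]
  rw [← MeasureTheory.integral_const_mul, ← MeasureTheory.integral_add hA1 hA2]
  have hpt : ∀ p ∈ R, ((d * Real.sin p.1) *
      (U (t, x + d*Real.sin p.1*Real.cos p.2, y + d*Real.sin p.1*Real.sin p.2)
        + (d*Real.sin p.1*Real.cos p.2) * Dx (t, x + d*Real.sin p.1*Real.cos p.2,
            y + d*Real.sin p.1*Real.sin p.2)
        + (d*Real.sin p.1*Real.sin p.2) * Dy (t, x + d*Real.sin p.1*Real.cos p.2,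
            y + d*Real.sin p.1*Real.sin p.2))
      + Δt * ((d * Real.sin p.1) *
        Dt (t, x + d*Real.sin p.1*Real.cos p.2, y + d*Real.sin p.1*Real.sin p.2)))
      = d * K 0 p := by
    intro p _
    have hQ0 : Q 0 p.1 p.2 = (t, x + d*Real.sin p.1*Real.cos p.2,
        y + d*Real.sin p.1*Real.sin p.2) := by
      simp only [hQdef, hd_def]
      norm_num
    simp only [hKdef, hQ0]
    ring
  rw [MeasureTheory.setIntegral_congr_fun hRmeas hpt, MeasureTheory.integral_const_mul]
  have hG0 : (∫ p in R, K 0 p) = G 0 := rfl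
  rw [hG0]
  -- step D : constancy of G  (to be proven)
  -- second partial derivative continuity
  have hsec : ∀ (ff : ℝ×ℝ×ℝ → ℝ), ContDiff ℝ (⊤ : ℕ∞) ff → ∀ v : ℝ×ℝ×ℝ,
      Continuous (pd v ff) := fun ff hff v => (pd_contDiff hff v).continuous
  have hC2x := hsec Dx hDxc
  have hC2y := hsec Dy hDyc
  have hC2t := hsec Dt hDtc
  have hCU := hU.continuous
  have hCx := hDxc.continuous
  have hCy := hDyc.continuous
  have hCt := hDtc.continuous
  have hconst : G 0 = G Δt := by
    have hGderiv : ∀ s₀ : ℝ, HasDerivAt G 0 s₀ := by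
      intro s₀
      set E : ℝ → ℝ×ℝ → ℝ := fun s p =>
        ((Dt (Q s p.1 p.2)
            + -(c*Real.sin p.1*Real.cos p.2) * Dx (Q s p.1 p.2)
            + -(c*Real.sin p.1*Real.sin p.2) * Dy (Q s p.1 p.2))
          + ((-(c*Real.sin p.1)) * (Real.cos p.2 * Dx (Q s p.1 p.2)
                + Real.sin p.2 * Dy (Q s p.1 p.2))
            + (c*(Δt-s)*Real.sin p.1) *
              (Real.cos p.2 * (pd (1,0,0) Dx (Q s p.1 p.2)
                  + -(c*Real.sin p.1*Real.cos p.2) * pd (0,1,0) Dx (Q s p.1 p.2)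
                  + -(c*Real.sin p.1*Real.sin p.2) * pd (0,0,1) Dx (Q s p.1 p.2))
                + Real.sin p.2 * (pd (1,0,0) Dy (Q s p.1 p.2)
                  + -(c*Real.sin p.1*Real.cos p.2) * pd (0,1,0) Dy (Q s p.1 p.2)
                  + -(c*Real.sin p.1*Real.sin p.2) * pd (0,0,1) Dy (Q s p.1 p.2))))
          + ((-1) * Dt (Q s p.1 p.2)
            + (Δt-s) * (pd (1,0,0) Dt (Q s p.1 p.2)
                + -(c*Real.sin p.1*Real.cos p.2) * pd (0,1,0) Dt (Q s p.1 p.2)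
                + -(c*Real.sin p.1*Real.sin p.2) * pd (0,0,1) Dt (Q s p.1 p.2))))
          * Real.sin p.1 with hEdef
      -- derivative in s of K, pointwise
      have hKds : ∀ (s : ℝ) (p : ℝ×ℝ), HasDerivAt (fun s' => K s' p) (E s p) s := by
        intro s p
        have hvel : HasDerivAt (fun s' => Q s' p.1 p.2)
            (1, -(c*Real.sin p.1*Real.cos p.2), -(c*Real.sin p.1*Real.sin p.2)) s := by
          refine HasDerivAt.prodMk ?_ (HasDerivAt.prodMk ?_ ?_)
          · simpa using (hasDerivAt_id s).const_add t
          · have h := ((((hasDerivAt_id s).const_sub Δt).const_mul c).mul_const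
              (Real.sin p.1)).mul_const (Real.cos p.2)
            have h2 := h.const_add x
            exact h2.congr_deriv (by ring)
          · have h := ((((hasDerivAt_id s).const_sub Δt).const_mul c).mul_const
              (Real.sin p.1)).mul_const (Real.sin p.2)
            have h2 := h.const_add y
            exact h2.congr_deriv (by ring)
        have hU' := pd_hasDerivAt hU hvel
        have hx' := pd_hasDerivAt hDxc hvel
        have hy' := pd_hasDerivAt hDyc hvel
        have ht' := pd_hasDerivAt hDtc hvel
        have hcoef : HasDerivAt (fun s' => c*(Δt-s')*Real.sin p.1)
            (-(c*Real.sin p.1)) s := by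
          have h := (((hasDerivAt_id s).const_sub Δt).const_mul c).mul_const (Real.sin p.1)
          exact h.congr_deriv (by ring)
        have hcoef2 : HasDerivAt (fun s' => Δt - s') (-1 : ℝ) s :=
          (hasDerivAt_id s).const_sub Δt
        have hmid := hcoef.mul ((hx'.const_mul (Real.cos p.2)).add
          (hy'.const_mul (Real.sin p.2)))
        have hlast := hcoef2.mul ht'
        have htot := ((hU'.add hmid).add hlast).mul_const (Real.sin p.1)
        refine htot.congr_deriv ?_
        rw [hEdef]
        simp only [pd_expand (1, -(c*Real.sin p.1*Real.cos p.2),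
          -(c*Real.sin p.1*Real.sin p.2))]
        simp only [Pi.add_apply, Pi.mul_apply, Pi.neg_apply]
        ring
      -- joint continuity of E
      have hEjoint : Continuous fun z : ℝ × (ℝ×ℝ) => E z.1 z.2 := by
        simp only [hEdef, hQdef]
        fun_prop
      have hEcont : ∀ s, Continuous fun p : ℝ×ℝ => E s p := fun s =>
        hEjoint.comp (Continuous.prodMk continuous_const continuous_id)
      -- uniform bound near s₀
      obtain ⟨C, hC⟩ := (IsCompact.prod (isCompact_Icc (a := s₀ - 1) (b := s₀ + 1))
        (isCompact_Icc (a := ((0:ℝ), -π)) (b := ((π/2:ℝ), π)))).exists_bound_of_continuousOn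
        hEjoint.continuousOn
      -- differentiation under the integral sign
      have hbound : ∀ᵐ p ∂(volume.restrict R), ∀ s ∈ Metric.ball s₀ 1,
          ‖E s p‖ ≤ C := by
        refine ((MeasureTheory.ae_restrict_mem hRmeas).mono ?_)
        intro p hp s hs
        refine hC (s, p) ⟨?_, hRsub hp⟩
        have h2 := Metric.mem_ball.1 hs
        rw [Real.dist_eq] at h2
        constructor
        · linarith [(abs_lt.1 h2).1]
        · linarith [(abs_lt.1 h2).2]
      have hdiff : ∀ᵐ p ∂(volume.restrict R), ∀ s ∈ Metric.ball s₀ 1,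
          HasDerivAt (fun s' => K s' p) (E s p) s :=
        Filter.Eventually.of_forall fun p s _ => hKds s p
      have key := hasDerivAt_integral_of_dominated_loc_of_deriv_le
        (μ := volume.restrict R) (F := fun s p => K s p) (F' := fun s p => E s p)
        (x₀ := s₀) (bound := fun _ => C) (s := Metric.ball s₀ 1) (Metric.ball_mem_nhds s₀ one_pos)
        (Filter.Eventually.of_forall fun s => ((hKs s).aestronglyMeasurable).restrict)
        (hIOn _ (hKs s₀))
        ((hEcont s₀).aestronglyMeasurable.restrict)
        hbound (hIOn _ continuous_const) hdiff
      have hG' : HasDerivAt G (∫ p in R, E s₀ p) s₀ := key.2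
      -- the integral of E s₀ vanishes
      have hzero : (∫ p in R, E s₀ p) = 0 := by
        set m : ℝ := Δt - s₀ with hm
        set Hf : ℝ×ℝ → ℝ := fun p => Real.sin p.1 * Real.cos p.1 *
          (Real.cos p.2 * Dx (Q s₀ p.1 p.2) + Real.sin p.2 * Dy (Q s₀ p.1 p.2)) with hHf
        set Qf : ℝ×ℝ → ℝ := fun p => -Real.sin p.2 * Dx (Q s₀ p.1 p.2)
          + Real.cos p.2 * Dy (Q s₀ p.1 p.2) with hQf
        set HD : ℝ×ℝ → ℝ := fun p =>
          (Real.cos p.1 * Real.cos p.1 - Real.sin p.1 * Real.sin p.1) *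
            (Real.cos p.2 * Dx (Q s₀ p.1 p.2) + Real.sin p.2 * Dy (Q s₀ p.1 p.2))
          + Real.sin p.1 * Real.cos p.1 *
            (Real.cos p.2 * (c*m*Real.cos p.1*Real.cos p.2 * pd (0,1,0) Dx (Q s₀ p.1 p.2)
                + c*m*Real.cos p.1*Real.sin p.2 * pd (0,0,1) Dx (Q s₀ p.1 p.2))
             + Real.sin p.2 * (c*m*Real.cos p.1*Real.cos p.2 * pd (0,1,0) Dy (Q s₀ p.1 p.2)
                + c*m*Real.cos p.1*Real.sin p.2 * pd (0,0,1) Dy (Q s₀ p.1 p.2))) with hHD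
        set QD : ℝ×ℝ → ℝ := fun p =>
          ((-Real.cos p.2) * Dx (Q s₀ p.1 p.2) + (-Real.sin p.2) *
            (-(c*m*Real.sin p.1*Real.sin p.2) * pd (0,1,0) Dx (Q s₀ p.1 p.2)
              + (c*m*Real.sin p.1*Real.cos p.2) * pd (0,0,1) Dx (Q s₀ p.1 p.2)))
          + ((-Real.sin p.2) * Dy (Q s₀ p.1 p.2) + Real.cos p.2 *
            (-(c*m*Real.sin p.1*Real.sin p.2) * pd (0,1,0) Dy (Q s₀ p.1 p.2)
              + (c*m*Real.sin p.1*Real.cos p.2) * pd (0,0,1) Dy (Q s₀ p.1 p.2))) with hQD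
        -- pointwise identity using the wave equation and symmetry of second derivatives
        have hiden : ∀ p : ℝ×ℝ, E s₀ p = c * (HD p + QD p) := by
          intro p
          have hq := hwave' (Q s₀ p.1 p.2)
          have hs2 : pd (0,1,0) Dt (Q s₀ p.1 p.2) = pd (1,0,0) Dx (Q s₀ p.1 p.2) := by
            rw [hDt, hDx]; exact pd_symm hU (1,0,0) (0,1,0) _
          have hs3 : pd (0,0,1) Dt (Q s₀ p.1 p.2) = pd (1,0,0) Dy (Q s₀ p.1 p.2) := by
            rw [hDt, hDy]; exact pd_symm hU (1,0,0) (0,0,1) _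
          rw [hEdef, hHD, hQD]
          simp only
          rw [hs2, hs3, hq, ← hm]
          linear_combination
            (-(c^2*m*Real.sin p.1*(pd (0,1,0) Dx (Q s₀ p.1 p.2)
                + pd (0,0,1) Dy (Q s₀ p.1 p.2)))) * Real.sin_sq_add_cos_sq p.2
            + (-(c^2*m*Real.sin p.1*((Real.cos p.2)^2 * pd (0,1,0) Dx (Q s₀ p.1 p.2)
                + Real.cos p.2*Real.sin p.2 * pd (0,0,1) Dx (Q s₀ p.1 p.2)
                + Real.sin p.2*Real.cos p.2 * pd (0,1,0) Dy (Q s₀ p.1 p.2)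
                + (Real.sin p.2)^2 * pd (0,0,1) Dy (Q s₀ p.1 p.2)))
              - c*(Real.cos p.2 * Dx (Q s₀ p.1 p.2)
                + Real.sin p.2 * Dy (Q s₀ p.1 p.2))) * Real.sin_sq_add_cos_sq p.1
        have hHDcont : Continuous HD := by
          simp only [hHD, hQdef]; fun_prop
        have hQDcont : Continuous QD := by
          simp only [hQD, hQdef]; fun_prop
        have hHDint : IntegrableOn HD R volume := hIOn _ hHDcont
        have hQDint : IntegrableOn QD R volume := hIOn _ hQDcont
        -- the H-part integrates to zero (fundamental theorem of calculus in φ)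
        have hinnerH : ∀ θ : ℝ, (∫ φ in Set.Ioo (0:ℝ) (π/2), HD (φ,θ)) = 0 := by
          intro θ
          have hder : ∀ φ : ℝ, HasDerivAt (fun φ' => Hf (φ', θ)) (HD (φ,θ)) φ := by
            intro φ
            have hvel : HasDerivAt (fun φ' => Q s₀ φ' θ)
                (0, c*m*Real.cos φ*Real.cos θ, c*m*Real.cos φ*Real.sin θ) φ := by
              refine HasDerivAt.prodMk (hasDerivAt_const φ (t+s₀)) (HasDerivAt.prodMk ?_ ?_)
              · have h := (((Real.hasDerivAt_sin φ).const_mul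
                  (c*(Δt-s₀))).mul_const (Real.cos θ)).const_add x
                convert h using 1
                try rw [hm]
                try ring
              · have h := (((Real.hasDerivAt_sin φ).const_mul
                  (c*(Δt-s₀))).mul_const (Real.sin θ)).const_add y
                convert h using 1
                try rw [hm]
                try ring
            have hxφ := pd_hasDerivAt hDxc hvel
            have hyφ := pd_hasDerivAt hDyc hvel
            have hcoefφ := (Real.hasDerivAt_sin φ).mul (Real.hasDerivAt_cos φ)
            have htot := hcoefφ.mul ((hxφ.const_mul (Real.cos θ)).add
              (hyφ.const_mul (Real.sin θ)))
            refine htot.congr_deriv ?_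
            rw [hHD]
            simp only [pd_expand (0, c*m*Real.cos φ*Real.cos θ, c*m*Real.cos φ*Real.sin θ)]
            simp only [Pi.add_apply, Pi.mul_apply, Pi.neg_apply]
            ring
          have hcont : Continuous fun φ : ℝ => HD (φ, θ) :=
            hHDcont.comp (continuous_id.prodMk continuous_const)
          have hFTC := intervalIntegral.integral_eq_sub_of_hasDerivAt
            (f := fun φ' => Hf (φ', θ)) (a := 0) (b := π/2)
            (fun φ _ => hder φ) (hcont.intervalIntegrable 0 (π/2))
          rw [← MeasureTheory.integral_Ioc_eq_integral_Ioo,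
            ← intervalIntegral.integral_of_le (by positivity), hFTC, hHf]
          simp
        -- the Q-part integrates to zero (fundamental theorem of calculus in θ)
        have hinnerQ : ∀ φ : ℝ, (∫ θ in Set.Ioo (-π) π, QD (φ,θ)) = 0 := by
          intro φ
          have hder : ∀ θ : ℝ, HasDerivAt (fun θ' => Qf (φ, θ')) (QD (φ,θ)) θ := by
            intro θ
            have hvel : HasDerivAt (fun θ' => Q s₀ φ θ')
                (0, -(c*m*Real.sin φ*Real.sin θ), c*m*Real.sin φ*Real.cos θ) θ := by
              refine HasDerivAt.prodMk (hasDerivAt_const θ (t+s₀)) (HasDerivAt.prodMk ?_ ?_)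
              · have h := ((Real.hasDerivAt_cos θ).const_mul
                  (c*(Δt-s₀)*Real.sin φ)).const_add x
                convert h using 1
                try rw [hm]
                try ring
              · have h := ((Real.hasDerivAt_sin θ).const_mul
                  (c*(Δt-s₀)*Real.sin φ)).const_add y
                convert h using 1
                try rw [hm]
                try ring
            have hxθ := pd_hasDerivAt hDxc hvel
            have hyθ := pd_hasDerivAt hDyc hvel
            have h1 := ((Real.hasDerivAt_sin θ).neg).mul hxθ
            have h2 := (Real.hasDerivAt_cos θ).mul hyθ
            have htot := h1.add h2
            refine htot.congr_deriv ?_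
            rw [hQD]
            simp only [pd_expand (0, -(c*m*Real.sin φ*Real.sin θ), c*m*Real.sin φ*Real.cos θ)]
            simp only [Pi.add_apply, Pi.mul_apply, Pi.neg_apply]
            ring
          have hcont : Continuous fun θ : ℝ => QD (φ, θ) :=
            hQDcont.comp (continuous_const.prodMk continuous_id)
          have hFTC := intervalIntegral.integral_eq_sub_of_hasDerivAt
            (f := fun θ' => Qf (φ, θ')) (a := -π) (b := π)
            (fun θ _ => hder θ) (hcont.intervalIntegrable (-π) π)
          rw [← MeasureTheory.integral_Ioc_eq_integral_Ioo,
            ← intervalIntegral.integral_of_le (by linarith [Real.pi_pos]), hFTC]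
          have hQpt : Q s₀ φ π = Q s₀ φ (-π) := by
            simp [hQdef, Real.sin_neg, Real.cos_neg]
          simp only [hQf]
          rw [hQpt]
          simp [Real.sin_neg, Real.cos_neg]
        -- assemble via Fubini
        have hHzero : (∫ p in R, HD p) = 0 := by
          have hint2 : Integrable (fun z : ℝ×ℝ => HD z)
              ((volume.restrict (Set.Ioo (0:ℝ) (π/2))).prod
                (volume.restrict (Set.Ioo (-π) π))) := by
            rw [MeasureTheory.Measure.prod_restrict]
            have := hHDint
            rwa [hRdef, MeasureTheory.Measure.volume_eq_prod ℝ ℝ] at this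
          have hswap := MeasureTheory.integral_integral_swap
            (f := fun φ θ => HD (φ,θ)) (μ := volume.restrict (Set.Ioo (0:ℝ) (π/2)))
            (ν := volume.restrict (Set.Ioo (-π) π)) hint2
          rw [hRdef, MeasureTheory.Measure.volume_eq_prod ℝ ℝ,
            MeasureTheory.setIntegral_prod _ (by
              rwa [hRdef, MeasureTheory.Measure.volume_eq_prod ℝ ℝ] at hHDint)]
          rw [hswap]
          calc (∫ θ in Set.Ioo (-π) π, ∫ φ in Set.Ioo (0:ℝ) (π/2), HD (φ,θ))
              = ∫ θ in Set.Ioo (-π) π, (0:ℝ) :=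
                MeasureTheory.setIntegral_congr_fun measurableSet_Ioo
                  (fun θ _ => hinnerH θ)
            _ = 0 := by simp
        have hQzero : (∫ p in R, QD p) = 0 := by
          rw [hRdef, MeasureTheory.Measure.volume_eq_prod ℝ ℝ,
            MeasureTheory.setIntegral_prod _ (by
              rwa [hRdef, MeasureTheory.Measure.volume_eq_prod ℝ ℝ] at hQDint)]
          calc (∫ φ in Set.Ioo (0:ℝ) (π/2), ∫ θ in Set.Ioo (-π) π, QD (φ,θ))
              = ∫ φ in Set.Ioo (0:ℝ) (π/2), (0:ℝ) :=
                MeasureTheory.setIntegral_congr_fun measurableSet_Ioo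
                  (fun φ _ => hinnerQ φ)
            _ = 0 := by simp
        calc (∫ p in R, E s₀ p) = ∫ p in R, c * (HD p + QD p) :=
              MeasureTheory.setIntegral_congr_fun hRmeas (fun p _ => hiden p)
          _ = c * ((∫ p in R, HD p) + (∫ p in R, QD p)) := by
              rw [MeasureTheory.integral_const_mul, MeasureTheory.integral_add hHDint hQDint]
          _ = 0 := by rw [hHzero, hQzero]; ring
      rw [hzero] at hG'
      exact hG'
    have := is_const_of_deriv_eq_zero (fun s => (hGderiv s).differentiableAt)
      (fun s => (hGderiv s).deriv)
    exact this 0 Δt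
  rw [hconst, hGΔt]
  have hπ := Real.pi_ne_zero
  field_simp
end

section
/- (Unisolvence of bi-cubic Hermite interpolation on a rectangle.) Let a < b and c < d be real numbers and let the four corners of the rectangle [a,b] × [c,d] be p₁ = (a,c), p₂ = (b,c), p₃ = (b,d), p₄ = (a,d). Then for any prescribed data (v_i, s_i, t_i, w_i) ∈ ℝ⁴ for i = 1, 2, 3, 4, there exists a unique bi-cubic polynomial F(x,y) = Σ_{k=0}^{3} Σ_{ℓ=0}^{3} c_{k,ℓ} x^k y^ℓ (with real coefficients c_{k,ℓ}) such that for each corner p_i: F(p_i) = v_i, ∂_x F(p_i) = s_i, ∂_y F(p_i) = t_i, and ∂²_{xy} F(p_i) = w_i. -/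
open Finset

/-- The bi-cubic polynomial `F(x,y) = Σ_{k=0}^{3} Σ_{ℓ=0}^{3} q_{k,ℓ} x^k y^ℓ`
with coefficient matrix `q`. -/
def bicubic (q : Fin 4 → Fin 4 → ℝ) (x y : ℝ) : ℝ :=
  ∑ k : Fin 4, ∑ l : Fin 4, q k l * x ^ (k : ℕ) * y ^ (l : ℕ)

/-!
Write `β(x) = (1, x, x², x³)` and `β'(x) = (0, 1, 2x, 3x²)`. Then `F = bicubic q` satisfies
`F(x, y) = β(x) ⬝ q β(y)`, `∂ₓF = β'(x) ⬝ q β(y)`, `∂_yF = β(x) ⬝ q β'(y)` and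
`∂ₓ∂_yF = β'(x) ⬝ q β'(y)`. Hence the sixteen Hermite data of `F` on `{a, b} × {c, d}` form the
matrix `H(a, b) q H(c, d)ᵀ`, where the rows of `H(a, b)` are `β(a), β'(a), β(b), β'(b)`. Since
`det H(a, b) = (b - a)⁴`, both factors are invertible and `q` is uniquely determined by the data.
-/

open Matrix

theorem existsUnique_mul_mul_eq {M : Type*} [Monoid M] {a b : M} (ha : IsUnit a) (hb : IsUnit b)
    (d : M) : ∃! x, a * x * b = d := by
  obtain ⟨a, rfl⟩ := ha
  obtain ⟨b, rfl⟩ := hb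
  refine ⟨↑a⁻¹ * d * ↑b⁻¹, by simp [mul_assoc], fun x hx => ?_⟩
  rw [← hx]
  simp [mul_assoc]

theorem mul_mul_transpose_apply {l m n o : Type*} [Fintype n] [Fintype o]
    (A : Matrix l n ℝ) (Q : Matrix n o ℝ) (B : Matrix m o ℝ) (r : l) (s : m) :
    (A * Q * Bᵀ) r s = A r ⬝ᵥ Q *ᵥ B s := by
  rw [dotProduct_mulVec]
  rfl

section CubicBasis

variable {R : Type*} [CommRing R]

def cubicBasis (x : R) : Fin 4 → R := ![1, x, x ^ 2, x ^ 3]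

def cubicBasisDeriv (x : R) : Fin 4 → R := ![0, 1, 2 * x, 3 * x ^ 2]

def hermiteMatrix (a b : R) : Matrix (Fin 4) (Fin 4) R :=
  of ![cubicBasis a, cubicBasisDeriv a, cubicBasis b, cubicBasisDeriv b]

theorem hermiteMatrix_apply (a b : R) (r : Fin 4) :
    hermiteMatrix a b r = ![cubicBasis a, cubicBasisDeriv a, cubicBasis b, cubicBasisDeriv b] r :=
  rfl

theorem det_hermiteMatrix (a b : R) : (hermiteMatrix a b).det = (b - a) ^ 4 := by
  simp [hermiteMatrix, cubicBasis, cubicBasisDeriv, det_succ_row_zero, Fin.sum_univ_succ,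
    Fin.succAbove]
  ring

theorem isUnit_hermiteMatrix {K : Type*} [Field K] {a b : K} (h : a ≠ b) :
    IsUnit (hermiteMatrix a b) := by
  rw [isUnit_iff_isUnit_det, det_hermiteMatrix, isUnit_iff_ne_zero]
  exact pow_ne_zero 4 (sub_ne_zero.2 h.symm)

variable {𝕜 : Type*} [NontriviallyNormedField 𝕜]

theorem hasDerivAt_cubicBasis (x : 𝕜) : HasDerivAt cubicBasis (cubicBasisDeriv x) x := by
  refine hasDerivAt_pi.2 fun i => ?_
  fin_cases i
  · exact hasDerivAt_const x 1
  · exact hasDerivAt_id x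
  · simpa [cubicBasis, cubicBasisDeriv] using hasDerivAt_pow 2 x
  · simpa [cubicBasis, cubicBasisDeriv] using hasDerivAt_pow 3 x

theorem hasDerivAt_dotProduct_cubicBasis (u : Fin 4 → 𝕜) (x : 𝕜) :
    HasDerivAt (fun x => u ⬝ᵥ cubicBasis x) (u ⬝ᵥ cubicBasisDeriv x) x :=
  HasDerivAt.fun_sum fun i _ => ((hasDerivAt_pi.1 (hasDerivAt_cubicBasis x)) i).const_mul (u i)

end CubicBasis

theorem bicubic_eq_dotProduct (q : Fin 4 → Fin 4 → ℝ) (x y : ℝ) :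
    bicubic q x y = cubicBasis x ⬝ᵥ of q *ᵥ cubicBasis y := by
  simp [bicubic, cubicBasis, dotProduct, mulVec, Fin.sum_univ_four]
  ring

theorem deriv_bicubic_fst (q : Fin 4 → Fin 4 → ℝ) (x y : ℝ) :
    deriv (fun x => bicubic q x y) x = cubicBasisDeriv x ⬝ᵥ of q *ᵥ cubicBasis y := by
  simp_rw [bicubic_eq_dotProduct, dotProduct_comm (cubicBasis _),
    dotProduct_comm (cubicBasisDeriv x)]
  exact (hasDerivAt_dotProduct_cubicBasis _ x).deriv

theorem deriv_bicubic_snd (q : Fin 4 → Fin 4 → ℝ) (x y : ℝ) :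
    deriv (fun y => bicubic q x y) y = cubicBasis x ⬝ᵥ of q *ᵥ cubicBasisDeriv y := by
  simp_rw [bicubic_eq_dotProduct, dotProduct_mulVec]
  exact (hasDerivAt_dotProduct_cubicBasis _ y).deriv

theorem deriv_deriv_bicubic (q : Fin 4 → Fin 4 → ℝ) (x y : ℝ) :
    deriv (fun x => deriv (fun y => bicubic q x y) y) x =
      cubicBasisDeriv x ⬝ᵥ of q *ᵥ cubicBasisDeriv y := by
  simp_rw [deriv_bicubic_snd, dotProduct_comm (cubicBasis _),
    dotProduct_comm (cubicBasisDeriv x)]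
  exact (hasDerivAt_dotProduct_cubicBasis _ x).deriv

/-- Unisolvence of bi-cubic Hermite (Bogner–Fox–Schmit) interpolation on a rectangle:
given a rectangle `[a,b] × [c,d]` (with `a < b`, `c < d`) and, at each of its four
corners `p₁ = (a,c)`, `p₂ = (b,c)`, `p₃ = (b,d)`, `p₄ = (a,d)`, prescribed values
`v i`, first partials `s i` and `t i`, and mixed second partials `w i`, there is a
unique bi-cubic polynomial matching all 16 conditions. -/
theorem bicubic_hermite_unisolvent
    (a b c d : ℝ) (hab : a < b) (hcd : c < d)
    (v s t w : Fin 4 → ℝ) :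
    ∃! q : Fin 4 → Fin 4 → ℝ,
      ∀ i : Fin 4,
        bicubic q (![(a, c), (b, c), (b, d), (a, d)] i).1
            (![(a, c), (b, c), (b, d), (a, d)] i).2 = v i ∧
        deriv (fun x => bicubic q x (![(a, c), (b, c), (b, d), (a, d)] i).2)
            (![(a, c), (b, c), (b, d), (a, d)] i).1 = s i ∧
        deriv (fun y => bicubic q (![(a, c), (b, c), (b, d), (a, d)] i).1 y)
            (![(a, c), (b, c), (b, d), (a, d)] i).2 = t i ∧
        deriv (fun x => deriv (fun y => bicubic q x y)
              (![(a, c), (b, c), (b, d), (a, d)] i).2)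
            (![(a, c), (b, c), (b, d), (a, d)] i).1 = w i := by
  -- Entry `(2i + α, 2j + β)` is `∂ₓ^α ∂_y^β F` at `(xᵢ, yⱼ)`, where `x = (a, b)`, `y = (c, d)`.
  set D : Matrix (Fin 4) (Fin 4) ℝ :=
    !![v 0, t 0, v 3, t 3;
       s 0, w 0, s 3, w 3;
       v 1, t 1, v 2, t 2;
       s 1, w 1, s 2, w 2]
  refine (existsUnique_congr (q := fun q => hermiteMatrix a b * of q * (hermiteMatrix c d)ᵀ = D)
    fun q => ?_).2 <| existsUnique_mul_mul_eq (isUnit_hermiteMatrix hab.ne)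
      ((isUnit_transpose _).2 (isUnit_hermiteMatrix hcd.ne)) D
  simp_rw [deriv_deriv_bicubic, deriv_bicubic_fst, deriv_bicubic_snd, bicubic_eq_dotProduct,
    ← Matrix.ext_iff, mul_mul_transpose_apply]
  simp only [Fin.forall_fin_succ, Fin.isValue, Fin.succ_zero_eq_one, Fin.succ_one_eq_two,
    Fin.reduceSucc, IsEmpty.forall_iff, and_true, forall_const, hermiteMatrix_apply, D, of_apply,
    cons_val', cons_val_zero, cons_val_succ, cons_val_fin_one]
  tauto
end
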